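/- arXiv:2408.02196 — 3 statements merged into one kernel-verified Lean document; each statement's English description precedes it below -/
import Mathlib

section
/- Let T be a finite nonempty subset of ℤ and suppose there exists a set C ⊆ ℤ such that every integer can be written uniquely as t + c with t ∈ T and c ∈ C (i.e., translates of T by C tile ℤ). Then there exists such a set C that is periodic, i.e., there is a positive integer p with C + p = C. -/
/-- A set `C` tiles `ℤ` by `T` iff every `z` has a unique `c ∈ C` with `z - c ∈ T`. -/
def IsTilingZ (T : Finset ℤ) (C : Set ℤ) : Prop :=
  ∀ z : ℤ, ∃! c : ℤ, c ∈ C ∧ z - c ∈ T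

lemma pair_iff (T : Finset ℤ) (C : Set ℤ) :
    (∀ z : ℤ, ∃! p : ℤ × ℤ, p.1 ∈ T ∧ p.2 ∈ C ∧ p.1 + p.2 = z) ↔ IsTilingZ T C := by
  constructor
  · intro h z
    obtain ⟨⟨t, c⟩, ⟨ht, hc, hsum⟩, huniq⟩ := h z
    refine ⟨c, ⟨hc, by simpa [show z - c = t by omega] using ht⟩, ?_⟩
    intro c' ⟨hc', ht'⟩
    have := huniq (z - c', c') ⟨ht', hc', by ring⟩
    exact congrArg Prod.snd this
  · intro h z
    obtain ⟨c, ⟨hc, ht⟩, huniq⟩ := h z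
    refine ⟨(z - c, c), ⟨ht, hc, by ring⟩, ?_⟩
    rintro ⟨t₂, c₂⟩ ⟨ht₂, hc₂, hsum₂⟩
    have hc₂c : c₂ = c := huniq c₂ ⟨hc₂, by simpa [show z - c₂ = t₂ by omega] using ht₂⟩
    simp only [Prod.mk.injEq]
    omega

lemma mem_char (T : Finset ℤ) {C : Set ℤ} (hC : IsTilingZ T C) {z c : ℤ} (hc : z - c ∈ T) :
    c ∈ C ↔ ∀ c' ∈ C, z - c' ∈ T → c' = c := by
  constructor
  · intro hcC c' hc' ht'
    exact (hC z).unique ⟨hc', ht'⟩ ⟨hcC, hc⟩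
  · intro h
    obtain ⟨c'', ⟨h1, h2⟩, _⟩ := hC z
    have := h c'' h1 h2
    subst this; exact h1

/-- Forward determinism: two tilings agreeing on a window `[m, m + D)` of length
`D = max T - min T` agree on all of `[m, ∞)`. -/
lemma ext_ge (T : Finset ℤ) (hT : T.Nonempty) {C C' : Set ℤ}
    (hC : IsTilingZ T C) (hC' : IsTilingZ T C') (m : ℤ)
    (hag : ∀ x : ℤ, m ≤ x → x < m + (T.max' hT - T.min' hT) → (x ∈ C ↔ x ∈ C')) :
    ∀ c : ℤ, m ≤ c → (c ∈ C ↔ c ∈ C') := by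
  set a := T.min' hT with ha_def
  set b := T.max' hT with hb_def
  have key : ∀ n : ℕ, ∀ c : ℤ, m ≤ c → c - m < (n : ℤ) → (c ∈ C ↔ c ∈ C') := by
    intro n
    induction n with
    | zero => intro c h1 h2; omega
    | succ n ih =>
      intro c hmc hlt
      by_cases hsmall : c < m + (b - a)
      · exact hag c hmc hsmall
      push_neg at hsmall
      have hmem : ∀ (D : Set ℤ), IsTilingZ T D →
          (∀ x : ℤ, m ≤ x → x < c → (x ∈ D ↔ x ∈ C)) →
          (c ∈ D ↔ ¬ ∃ c' : ℤ, (c' ∈ C ∧ c + a - b ≤ c' ∧ c' < c) ∧ c + a - c' ∈ T) := by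
        intro D hD hDC
        have ha : (c + a) - c ∈ T := by simpa using T.min'_mem hT
        rw [mem_char T hD ha]
        constructor
        · rintro h ⟨c', ⟨hc'C, h1, h2⟩, h3⟩
          have hc'D : c' ∈ D := (hDC c' (by omega) h2).2 hc'C
          have := h c' hc'D h3
          omega
        · intro h c' hc'D ht'
          by_contra hne
          have hb1 : c + a - c' ≤ b := T.le_max' _ ht'
          have ha1 : a ≤ c + a - c' := T.min'_le _ ht'
          have h2 : c' < c := by omega
          have h1 : c + a - b ≤ c' := by omega
          exact h ⟨c', ⟨(hDC c' (by omega) h2).1 hc'D, h1, h2⟩, ht'⟩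
      rw [hmem C hC (fun x _ _ => Iff.rfl),
        hmem C' hC' (fun x hx1 hx2 => (ih x hx1 (by omega)).symm)]
  intro c hc
  exact key ((c - m).toNat + 1) c hc (by omega)

/-- Two tilings agreeing on a window `[m, m + D)` agree everywhere. -/
lemma ext_all (T : Finset ℤ) (hT : T.Nonempty) {C C' : Set ℤ}
    (hC : IsTilingZ T C) (hC' : IsTilingZ T C') (m : ℤ)
    (hag : ∀ x : ℤ, m ≤ x → x < m + (T.max' hT - T.min' hT) → (x ∈ C ↔ x ∈ C')) :
    ∀ c : ℤ, c ∈ C ↔ c ∈ C' := by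
  set a := T.min' hT with ha_def
  set b := T.max' hT with hb_def
  have hfwd : ∀ c : ℤ, m ≤ c → (c ∈ C ↔ c ∈ C') := ext_ge T hT hC hC' m hag
  have key : ∀ n : ℕ, ∀ c : ℤ, m - c < (n : ℤ) → (c ∈ C ↔ c ∈ C') := by
    intro n
    induction n with
    | zero => intro c h2; exact hfwd c (by omega)
    | succ n ih =>
      intro c hlt
      by_cases hge : m ≤ c
      · exact hfwd c hge
      push_neg at hge
      have hmem : ∀ (D : Set ℤ), IsTilingZ T D →
          (∀ x : ℤ, c < x → (x ∈ D ↔ x ∈ C)) →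
          (c ∈ D ↔ ¬ ∃ c' : ℤ, (c' ∈ C ∧ c < c' ∧ c' ≤ c + b - a) ∧ c + b - c' ∈ T) := by
        intro D hD hDC
        have hb : (c + b) - c ∈ T := by simpa using T.max'_mem hT
        rw [mem_char T hD hb]
        constructor
        · rintro h ⟨c', ⟨hc'C, h1, h2⟩, h3⟩
          have hc'D : c' ∈ D := (hDC c' h1).2 hc'C
          have := h c' hc'D h3
          omega
        · intro h c' hc'D ht'
          by_contra hne
          have hb1 : c + b - c' ≤ b := T.le_max' _ ht'
          have ha1 : a ≤ c + b - c' := T.min'_le _ ht'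
          have h1 : c < c' := by omega
          have h2 : c' ≤ c + b - a := by omega
          exact h ⟨c', ⟨(hDC c' h1).1 hc'D, h1, h2⟩, ht'⟩
      have htrans : ∀ x : ℤ, c < x → (x ∈ C' ↔ x ∈ C) := by
        intro x hx
        by_cases hxm : m ≤ x
        · exact (hfwd x hxm).symm
        · exact (ih x (by omega)).symm
      rw [hmem C hC (fun x _ => Iff.rfl), hmem C' hC' htrans]
  intro c
  exact key ((m - c).toNat + 1) c (by omega)

/-- If a finite nonempty `T ⊆ ℤ` tiles `ℤ` by translations with some
translate set `C`, then it tiles `ℤ` with some periodic translate set. -/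
theorem stmt_0 (T : Finset ℤ) (hT : T.Nonempty)
    (h : ∃ C : Set ℤ, ∀ z : ℤ, ∃! p : ℤ × ℤ,
      p.1 ∈ T ∧ p.2 ∈ C ∧ p.1 + p.2 = z) :
    ∃ C : Set ℤ,
      (∀ z : ℤ, ∃! p : ℤ × ℤ, p.1 ∈ T ∧ p.2 ∈ C ∧ p.1 + p.2 = z) ∧
      ∃ p : ℤ, 0 < p ∧ ∀ c : ℤ, c ∈ C ↔ c + p ∈ C := by
  classical
  obtain ⟨C, hCpair⟩ := h
  have hC : IsTilingZ T C := (pair_iff T C).mp hCpair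
  set a := T.min' hT with ha_def
  set b := T.max' hT with hb_def
  have hab : a ≤ b := T.min'_le _ (T.max'_mem hT)
  set d : ℕ := (b - a).toNat with hd_def
  have hd : (d : ℤ) = b - a := Int.toNat_of_nonneg (by omega)
  -- pigeonhole: two positions with the same window pattern
  have hcard : Fintype.card (Fin d → Prop) < Fintype.card (Fin (2 ^ d + 1)) := by
    simp [Fintype.card_fun, Fintype.card_prop]
  obtain ⟨n₁, n₂, hne, hfe⟩ :=
    Fintype.exists_ne_map_eq_of_card_lt
      (fun (n : Fin (2 ^ d + 1)) => fun (i : Fin d) => (((n : ℕ) : ℤ) + (i : ℤ)) ∈ C) hcard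
  -- WLOG n₁ < n₂
  obtain ⟨m₁, m₂, hm, hfe⟩ :
      ∃ m₁ m₂ : Fin (2 ^ d + 1), (m₁ : ℕ) < (m₂ : ℕ) ∧
        ∀ i : Fin d, ((((m₁ : ℕ) : ℤ) + (i : ℤ)) ∈ C) = ((((m₂ : ℕ) : ℤ) + (i : ℤ)) ∈ C) := by
    rcases lt_or_gt_of_ne (fun hq : (n₁ : ℕ) = (n₂ : ℕ) => hne (Fin.ext hq)) with hlt | hgt
    · exact ⟨n₁, n₂, hlt, fun i => congrFun hfe i⟩
    · exact ⟨n₂, n₁, hgt, fun i => (congrFun hfe i).symm⟩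
  set p : ℤ := ((m₂ : ℕ) : ℤ) - ((m₁ : ℕ) : ℤ) with hp_def
  have hppos : 0 < p := by omega
  -- the shifted set
  set C' : Set ℤ := {c : ℤ | c + p ∈ C} with hC'_def
  have hC' : IsTilingZ T C' := by
    intro z
    obtain ⟨c, ⟨hc, ht⟩, huniq⟩ := hC (z + p)
    refine ⟨c - p, ⟨by simpa [hC'_def] using hc, by simpa [show z - (c - p) = z + p - c by ring] using ht⟩, ?_⟩
    intro c₂ ⟨hc₂, ht₂⟩
    have := huniq (c₂ + p) ⟨hc₂, by simpa [show z + p - (c₂ + p) = z - c₂ by ring] using ht₂⟩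
    omega
  -- agreement on the window starting at m₁
  have hag : ∀ x : ℤ, ((m₁ : ℕ) : ℤ) ≤ x → x < ((m₁ : ℕ) : ℤ) + (b - a) → (x ∈ C ↔ x ∈ C') := by
    intro x hx1 hx2
    have hi : (x - ((m₁ : ℕ) : ℤ)).toNat < d := by omega
    have := hfe ⟨(x - ((m₁ : ℕ) : ℤ)).toNat, hi⟩
    simp only at this
    have hx' : (((x - ((m₁ : ℕ) : ℤ)).toNat : ℤ)) = x - ((m₁ : ℕ) : ℤ) :=
      Int.toNat_of_nonneg (by omega)
    rw [hx'] at this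
    have h1 : ((m₁ : ℕ) : ℤ) + (x - ((m₁ : ℕ) : ℤ)) = x := by ring
    have h2 : ((m₂ : ℕ) : ℤ) + (x - ((m₁ : ℕ) : ℤ)) = x + p := by omega
    rw [h1, h2] at this
    simpa [hC'_def] using iff_of_eq this
  have hext := ext_all T hT hC hC' ((m₁ : ℕ) : ℤ) hag
  refine ⟨C, hCpair, p, hppos, ?_⟩
  intro c
  simpa [hC'_def] using hext c
end

section
/- A finite set W of Wang tiles admits a valid tiling of the full plane ℤ² if and only if it admits a valid tiling of the quadrant ℕ × ℕ. -/
abbrev WangTile (Q : Type*) := Q × Q × Q × Q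

def north {Q : Type*} (w : WangTile Q) : Q := w.1
def east {Q : Type*} (w : WangTile Q) : Q := w.2.1
def south {Q : Type*} (w : WangTile Q) : Q := w.2.2.1
def west {Q : Type*} (w : WangTile Q) : Q := w.2.2.2

def ValidTilingZ2 {Q : Type*} (W : Finset (WangTile Q)) (f : ℤ × ℤ → WangTile Q) : Prop :=
  (∀ p : ℤ × ℤ, f p ∈ W) ∧
  (∀ x y : ℤ, east (f (x, y)) = west (f (x + 1, y))) ∧
  (∀ x y : ℤ, north (f (x, y)) = south (f (x, y + 1)))

/-- `W` admits a valid tiling of the full plane `ℤ²` iff it admits a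
valid tiling of the quadrant `ℕ × ℕ`. -/
theorem stmt_7 {Q : Type*} [Fintype Q] (W : Finset (WangTile Q)) :
    (∃ f : ℤ × ℤ → WangTile Q, ValidTilingZ2 W f) ↔
      ∃ g : ℕ × ℕ → WangTile Q,
        (∀ p : ℕ × ℕ, g p ∈ W) ∧
        (∀ x y : ℕ, east (g (x, y)) = west (g (x + 1, y))) ∧
        (∀ x y : ℕ, north (g (x, y)) = south (g (x, y + 1))) := by
  constructor
  · rintro ⟨f, hmem, hE, hN⟩
    exact ⟨fun p => f (p.1, p.2), fun p => hmem _,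
      fun x y => by simpa using hE (x : ℤ) (y : ℤ),
      fun x y => by simpa using hN (x : ℤ) (y : ℤ)⟩
  · rintro ⟨g, hmem, hE, hN⟩
    classical
    -- shifted tilings
    let h : ℕ → ℤ × ℤ → WangTile Q :=
      fun n p => g ((p.1 + n).toNat, (p.2 + n).toNat)
    let u : Ultrafilter ℕ := Ultrafilter.of Filter.cofinite
    have hcof : (u : Filter ℕ) ≤ (Filter.cofinite : Filter ℕ) :=
      Ultrafilter.of_le Filter.cofinite
    -- key : for each p there is a limit value along u
    have key : ∀ p : ℤ × ℤ, ∃ w : WangTile Q, {n | h n p = w} ∈ u := by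
      intro p
      haveI : Finite (WangTile Q) := by infer_instance
      obtain ⟨w, hw⟩ := (u.map (fun n => h n p)).eq_pure_of_finite
      refine ⟨w, ?_⟩
      have : {w} ∈ u.map (fun n => h n p) := by rw [hw]; exact Filter.mem_pure.mpr rfl
      simpa [Filter.mem_map, Set.preimage, Set.mem_singleton_iff] using this
    choose f hf using key
    -- large set of n making all coordinates nonneg
    have hlarge : ∀ x : ℤ, {n : ℕ | 0 ≤ x + n} ∈ u := by
      intro x
      apply hcof
      rw [Filter.mem_cofinite]
      apply Set.Finite.subset (Set.finite_Icc 0 x.natAbs)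
      intro n hn
      simp only [Set.mem_compl_iff, Set.mem_setOf_eq, not_le] at hn
      refine ⟨Nat.zero_le _, ?_⟩
      omega
    refine ⟨f, ⟨?_, ?_, ?_⟩⟩
    · intro p
      have : {n | h n p = f p} ∈ u := hf p
      obtain ⟨n, hn⟩ := (u.nonempty_of_mem this)
      rw [← hn]
      exact hmem _
    · intro x y
      have h1 := hf (x, y)
      have h2 := hf (x + 1, y)
      have h3 := hlarge x
      obtain ⟨n, ⟨hn1, hn2⟩, hn3⟩ := u.nonempty_of_mem (Filter.inter_mem (Filter.inter_mem h1 h2) h3)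
      simp only [Set.mem_setOf_eq] at hn1 hn2 hn3
      rw [← hn1, ← hn2]
      have hx1 : (x + 1 + n).toNat = (x + n).toNat + 1 := by omega
      simp only [h, hx1]
      exact hE _ _
    · intro x y
      have h1 := hf (x, y)
      have h2 := hf (x, y + 1)
      have h3 := hlarge y
      obtain ⟨n, ⟨hn1, hn2⟩, hn3⟩ := u.nonempty_of_mem (Filter.inter_mem (Filter.inter_mem h1 h2) h3)
      simp only [Set.mem_setOf_eq] at hn1 hn2 hn3
      rw [← hn1, ← hn2]
      have hy1 : (y + 1 + n).toNat = (y + n).toNat + 1 := by omega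
      simp only [h, hy1]
      exact hN _ _
end

section
/- If a finite set W of Wang tiles admits a valid tiling of ℤ² that is periodic in one direction (there is a nonzero vector v ∈ ℤ² with f(x + v) = f(x) for all x), then W admits a valid tiling of ℤ² that is fully periodic (periodic with respect to two linearly independent vectors). -/
private lemma chain_aux {α : Type*} (C : ℤ → α) (q m x1 : ℤ) (hq : 0 < q)
    (hK : ∀ j, -m ≤ j → j ≤ m → C (x1 + j) = C (x1 + q + j)) :
    ∀ n : ℕ, ∀ t t', (t' - t).natAbs ≤ n →
      x1 - m ≤ t → t ≤ x1 + m + q → x1 - m ≤ t' → t' ≤ x1 + m + q →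
      q ∣ t' - t → C t = C t' := by
  intro n
  induction n with
  | zero =>
    intro t t' hn _ _ _ _ _
    have : t = t' := by omega
    rw [this]
  | succ n ih =>
    intro t t' hn h1 h2 h3 h4 hdvd
    obtain ⟨d, hd⟩ := hdvd
    rcases lt_trichotomy t t' with h | h | h
    · have hd1 : 1 ≤ d := by nlinarith
      have hqd : q ≤ t' - t := by nlinarith
      have hstep : C t = C (t + q) := by
        have h' := hK (t - x1) (by omega) (by omega)
        rw [show x1 + (t - x1) = t by ring, show x1 + q + (t - x1) = t + q by ring] at h'
        exact h'
      rw [hstep]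
      exact ih (t + q) t' (by omega) (by omega) (by omega) h3 h4
        ⟨d - 1, by rw [mul_sub, mul_one, ← hd]; ring⟩
    · rw [h]
    · have hd1 : d ≤ -1 := by nlinarith
      have hqd : q ≤ t - t' := by nlinarith
      have hstep : C t' = C (t' + q) := by
        have h' := hK (t' - x1) (by omega) (by omega)
        rw [show x1 + (t' - x1) = t' by ring, show x1 + q + (t' - x1) = t' + q by ring] at h'
        exact h'
      rw [hstep]
      exact ih t (t' + q) (by omega) h1 h2 (by omega) (by omega)
        ⟨d + 1, by rw [mul_add, mul_one, ← hd]; ring⟩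

private lemma core {α : Type*} [Finite α] (F : ℤ → ℤ → α)
    (P : α → Prop) (H V : α → α → Prop)
    (hP : ∀ x y, P (F x y))
    (hH : ∀ x y, H (F x y) (F (x + 1) y))
    (hV : ∀ x y, V (F x y) (F x (y + 1)))
    (a b : ℤ) (hb : 0 < b)
    (hper : ∀ x y, F (x + a) (y + b) = F x y) :
    ∃ (G : ℤ → ℤ → α) (q : ℤ), 0 < q ∧
      (∀ x y, P (G x y)) ∧ (∀ x y, H (G x y) (G (x + 1) y)) ∧
      (∀ x y, V (G x y) (G x (y + 1))) ∧
      (∀ x y, G (x + q) y = G x y) ∧ (∀ x y, G (x + a) (y + b) = G x y) := by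
  classical
  set m : ℤ := (a.natAbs : ℤ) with hm
  have hm0 : 0 ≤ m := by omega
  have hma1 : -m ≤ a := by omega
  have hma2 : a ≤ m := by omega
  set L : ℕ := 2 * a.natAbs + 1 with hL
  set B : ℕ := b.toNat with hB
  set D : ℤ → (Fin L → Fin B → α) := fun x j i => F (x + (j : ℤ) - m) (i : ℤ) with hD
  obtain ⟨z1, z2, hne, hDeq⟩ := Finite.exists_ne_map_eq_of_infinite D
  obtain ⟨x1, x2, hlt, hDD⟩ : ∃ x1 x2 : ℤ, x1 < x2 ∧ D x1 = D x2 := by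
    rcases hne.lt_or_gt with h | h
    · exact ⟨z1, z2, h, hDeq⟩
    · exact ⟨z2, z1, h, hDeq.symm⟩
  set q : ℤ := x2 - x1 with hqdef
  have hq : 0 < q := by omega
  have hK : ∀ j, -m ≤ j → j ≤ m → ∀ i, 0 ≤ i → i < b →
      F (x1 + j) i = F (x1 + q + j) i := by
    intro j hj1 hj2 i hi1 hi2
    have hj' : (j + m).toNat < L := by omega
    have hi' : i.toNat < B := by omega
    have h : F (x1 + (((j + m).toNat : ℕ) : ℤ) - m) (((i.toNat : ℕ) : ℤ))
        = F (x2 + (((j + m).toNat : ℕ) : ℤ) - m) (((i.toNat : ℕ) : ℤ)) :=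
      congrFun (congrFun hDD ⟨(j + m).toNat, hj'⟩) ⟨i.toNat, hi'⟩
    rw [Int.toNat_of_nonneg (by omega : (0:ℤ) ≤ j + m),
        Int.toNat_of_nonneg hi1] at h
    rw [show x1 + (j + m) - m = x1 + j by ring,
        show x2 + (j + m) - m = x1 + q + j by omega] at h
    exact h
  have chain : ∀ i, 0 ≤ i → i < b → ∀ t t',
      x1 - m ≤ t → t ≤ x1 + m + q → x1 - m ≤ t' → t' ≤ x1 + m + q →
      q ∣ t' - t → F t i = F t' i := by
    intro i hi1 hi2 t t' h1 h2 h3 h4 h5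
    exact chain_aux (fun t => F t i) q m x1 hq
      (fun j hj1 hj2 => hK j hj1 hj2 i hi1 hi2) (t' - t).natAbs t t' le_rfl h1 h2 h3 h4 h5
  set red : ℤ → ℤ := fun t => x1 + (t - x1) % q with hredDef
  have hred1 : ∀ t, x1 ≤ red t := by
    intro t
    have h := Int.emod_nonneg (t - x1) hq.ne'
    show x1 ≤ x1 + (t - x1) % q
    linarith
  have hred2 : ∀ t, red t < x1 + q := by
    intro t
    have h := Int.emod_lt_of_pos (t - x1) hq
    show x1 + (t - x1) % q < x1 + q
    linarith
  have hredd : ∀ t, q ∣ t - red t := by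
    intro t
    refine ⟨(t - x1) / q, ?_⟩
    show t - (x1 + (t - x1) % q) = q * ((t - x1) / q)
    rw [Int.emod_def]
    ring
  have hredq : ∀ t, red (t + q) = red t := by
    intro t
    show x1 + (t + q - x1) % q = x1 + (t - x1) % q
    rw [show t + q - x1 = (t - x1) + q by ring]
    simp [Int.add_emod]
  have key : ∀ i, 0 ≤ i → i < b → ∀ s t, x1 - m ≤ s → s ≤ x1 + m + q →
      q ∣ t - s → F s i = F (red t) i := by
    intro i hi1 hi2 s t hs1 hs2 hdvd
    have hb1 := hred1 t
    have hb2 := hred2 t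
    refine chain i hi1 hi2 s (red t) hs1 hs2 (by linarith) (by linarith) ?_
    have h1 := hredd t
    have h2 : red t - s = (t - s) - (t - red t) := by ring
    rw [h2]
    exact dvd_sub hdvd h1
  have uniq : ∀ (z k r : ℤ), 0 ≤ r → r < b → z = b * k + r → z / b = k ∧ z % b = r := by
    intro z k r h1 h2 h3
    have hd : z / b = k := by
      rw [h3, show b * k + r = r + b * k by ring, Int.add_mul_ediv_left r k hb.ne',
        Int.ediv_eq_zero_of_lt h1 h2, zero_add]
    refine ⟨hd, ?_⟩
    rw [Int.emod_def, hd, h3]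
    ring
  refine ⟨fun x y => F (red (x - y / b * a)) (y % b), q, hq, ?_, ?_, ?_, ?_, ?_⟩
  · intro x y
    exact hP _ _
  · intro x y
    have hmod1 : 0 ≤ y % b := Int.emod_nonneg y hb.ne'
    have hmod2 : y % b < b := Int.emod_lt_of_pos y hb
    have hb1 := hred1 (x - y / b * a)
    have hb2 := hred2 (x - y / b * a)
    have e : F (red (x - y / b * a) + 1) (y % b) = F (red (x + 1 - y / b * a)) (y % b) := by
      refine key _ hmod1 hmod2 _ _ (by linarith) (by linarith) ?_
      have h1 := hredd (x - y / b * a)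
      have h2 : x + 1 - y / b * a - (red (x - y / b * a) + 1)
          = (x - y / b * a) - red (x - y / b * a) := by ring
      rw [h2]
      exact h1
    show H (F (red (x - y / b * a)) (y % b)) (F (red (x + 1 - y / b * a)) (y % b))
    rw [← e]
    exact hH _ _
  · intro x y
    have hmod1 : 0 ≤ y % b := Int.emod_nonneg y hb.ne'
    have hmod2 : y % b < b := Int.emod_lt_of_pos y hb
    have hy := Int.mul_ediv_add_emod y b
    rcases lt_or_eq_of_le (by omega : y % b + 1 ≤ b) with hcase | hcase
    · obtain ⟨hd, hm'⟩ := uniq (y + 1) (y / b) (y % b + 1) (by omega) hcase (by linarith)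
      show V (F (red (x - y / b * a)) (y % b)) (F (red (x - (y + 1) / b * a)) ((y + 1) % b))
      rw [hd, hm']
      exact hV _ _
    · obtain ⟨hd, hm'⟩ := uniq (y + 1) (y / b + 1) 0 le_rfl hb
        (by rw [mul_add, mul_one]; linarith)
      show V (F (red (x - y / b * a)) (y % b)) (F (red (x - (y + 1) / b * a)) ((y + 1) % b))
      rw [hd, hm']
      have hb1 := hred1 (x - y / b * a)
      have hb2 := hred2 (x - y / b * a)
      have e1 : F (red (x - y / b * a)) b = F (red (x - y / b * a) - a) 0 := by
        have h := hper (red (x - y / b * a) - a) 0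
        rw [show red (x - y / b * a) - a + a = red (x - y / b * a) by ring, zero_add] at h
        exact h
      have e2 : F (red (x - y / b * a) - a) 0 = F (red (x - (y / b + 1) * a)) 0 := by
        refine key 0 le_rfl hb _ _ (by linarith) (by linarith) ?_
        have h1 := hredd (x - y / b * a)
        have h2 : x - (y / b + 1) * a - (red (x - y / b * a) - a)
            = (x - y / b * a) - red (x - y / b * a) := by ring
        rw [h2]
        exact h1
      have h := hV (red (x - y / b * a)) (y % b)
      rw [show y % b + 1 = b by omega, e1, e2] at h
      exact h
  · intro x y
    show F (red (x + q - y / b * a)) (y % b) = F (red (x - y / b * a)) (y % b)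
    rw [show x + q - y / b * a = (x - y / b * a) + q by ring, hredq]
  · intro x y
    obtain ⟨hd, hm'⟩ := uniq (y + b) (y / b + 1) (y % b)
      (Int.emod_nonneg y hb.ne') (Int.emod_lt_of_pos y hb)
      (by rw [mul_add, mul_one]; linarith [Int.mul_ediv_add_emod y b])
    show F (red (x + a - (y + b) / b * a)) ((y + b) % b) = F (red (x - y / b * a)) (y % b)
    rw [hd, hm', show x + a - (y / b + 1) * a = x - y / b * a by ring]

private lemma branchB {Q : Type*} [Fintype Q] (W : Finset (WangTile Q))
    (f : ℤ × ℤ → WangTile Q) (hf : ValidTilingZ2 W f)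
    (a b : ℤ) (hb : 0 < b) (hper : ∀ x : ℤ × ℤ, f (x + (a, b)) = f x) :
    ∃ g : ℤ × ℤ → WangTile Q, ValidTilingZ2 W g ∧
      ∃ u w : ℤ × ℤ, u ≠ 0 ∧ w ≠ 0 ∧ u.1 * w.2 - u.2 * w.1 ≠ 0 ∧
        (∀ x : ℤ × ℤ, g (x + u) = g x) ∧ (∀ x : ℤ × ℤ, g (x + w) = g x) := by
  obtain ⟨hmem, hhor, hver⟩ := hf
  obtain ⟨G, q, hq, hP, hH, hV, hq1, hq2⟩ :=
    core (fun x y => f (x, y)) (· ∈ W) (fun p r => east p = west r)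
      (fun p r => north p = south r) (fun x y => hmem (x, y)) hhor hver a b hb
      (fun x y => by simpa using hper (x, y))
  refine ⟨fun p => G p.1 p.2, ⟨fun p => hP p.1 p.2, fun x y => hH x y, fun x y => hV x y⟩,
    (q, 0), (a, b), ?_, ?_, ?_, ?_, ?_⟩
  · simp only [ne_eq, Prod.mk_eq_zero, not_and]
    intro h; omega
  · simp only [ne_eq, Prod.mk_eq_zero, not_and]
    intro _; omega
  · show q * b - 0 * a ≠ 0
    rw [zero_mul, sub_zero]
    exact (mul_pos hq hb).ne'
  · rintro ⟨x, y⟩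
    simpa using hq1 x y
  · rintro ⟨x, y⟩
    simpa using hq2 x y

private lemma branchA {Q : Type*} [Fintype Q] (W : Finset (WangTile Q))
    (f : ℤ × ℤ → WangTile Q) (hf : ValidTilingZ2 W f)
    (a : ℤ) (ha : 0 < a) (hper : ∀ x : ℤ × ℤ, f (x + (a, 0)) = f x) :
    ∃ g : ℤ × ℤ → WangTile Q, ValidTilingZ2 W g ∧
      ∃ u w : ℤ × ℤ, u ≠ 0 ∧ w ≠ 0 ∧ u.1 * w.2 - u.2 * w.1 ≠ 0 ∧
        (∀ x : ℤ × ℤ, g (x + u) = g x) ∧ (∀ x : ℤ × ℤ, g (x + w) = g x) := by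
  obtain ⟨hmem, hhor, hver⟩ := hf
  obtain ⟨G, q, hq, hP, hH, hV, hq1, hq2⟩ :=
    core (fun x y => f (y, x)) (· ∈ W) (fun p r => north p = south r)
      (fun p r => east p = west r) (fun x y => hmem (y, x)) (fun x y => hver y x)
      (fun x y => hhor y x) 0 a ha
      (fun x y => by simpa using hper (y, x))
  refine ⟨fun p => G p.2 p.1, ⟨fun p => hP p.2 p.1, fun x y => hV y x, fun x y => hH y x⟩,
    (0, q), (a, 0), ?_, ?_, ?_, ?_, ?_⟩
  · simp only [ne_eq, Prod.mk_eq_zero, not_and]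
    intro _; omega
  · simp only [ne_eq, Prod.mk_eq_zero, not_and]
    intro h; omega
  · show 0 * 0 - q * a ≠ 0
    rw [zero_mul, zero_sub, neg_ne_zero]
    exact (mul_pos hq ha).ne'
  · rintro ⟨x, y⟩
    simpa using hq1 y x
  · rintro ⟨x, y⟩
    simpa using hq2 y x

/-- If `W` admits a valid tiling of `ℤ²` that is periodic in one
direction, then it admits a fully periodic valid tiling (with two linearly
independent period vectors). -/
theorem stmt_8 {Q : Type*} [Fintype Q] (W : Finset (WangTile Q))
    (f : ℤ × ℤ → WangTile Q) (hf : ValidTilingZ2 W f)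
    (v : ℤ × ℤ) (hv : v ≠ 0) (hper : ∀ x : ℤ × ℤ, f (x + v) = f x) :
    ∃ g : ℤ × ℤ → WangTile Q, ValidTilingZ2 W g ∧
      ∃ u w : ℤ × ℤ, u ≠ 0 ∧ w ≠ 0 ∧ u.1 * w.2 - u.2 * w.1 ≠ 0 ∧
        (∀ x : ℤ × ℤ, g (x + u) = g x) ∧ (∀ x : ℤ × ℤ, g (x + w) = g x) := by
  have hneg : ∀ x : ℤ × ℤ, f (x + -v) = f x := by
    intro x
    have h := hper (x + -v)
    rw [neg_add_cancel_right] at h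
    exact h.symm
  obtain ⟨a, b⟩ := v
  rcases lt_trichotomy b 0 with hb | hb | hb
  · exact branchB W f hf (-a) (-b) (by omega) (fun x => by simpa using hneg x)
  · subst hb
    have ha : a ≠ 0 := by
      rintro rfl
      exact hv rfl
    rcases ha.lt_or_gt with ha' | ha'
    · exact branchA W f hf (-a) (by omega) (fun x => by simpa using hneg x)
    · exact branchA W f hf a ha' hper
  · exact branchB W f hf a b hb hper
end
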